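/- arXiv:2506.14639 — 3 statements merged into one kernel-verified Lean document; each statement's English description precedes it below -/
import Mathlib

section
/- Let n ≥ 1 and 0 < d < n, and let Γ ⊆ ℝ^n be a nonempty closed d-Ahlfors regular set with constant 𝒜, with measure σ = ℋ^d restricted to Γ. Let 0 < s ≤ 1 and d/(d+s) < p < 1, and set θ = s + d − d/p (so that 0 < θ < 1). Then there is a constant C, depending only on n, d, s, p, and 𝒜, such that for every z ∈ Γ, every ϱ > 0, and every block a in Δ(z,ϱ): ∫_Γ ∫_Γ |a(x) − a(y)| |x−y|^{−d−θ} dσ(y) dσ(x) ≤ C ϱ^{d/p − d/2 − s}. That is, every block a in Δ(z,ϱ) satisfies ‖a‖_{Λ^{θ,1}(Γ)} ≤ C ϱ^{(d − dp/2 − sp)/p}. -/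
/-!
Ahlfors regularity is assumed only below the diameter, but it still gives a growth bound
`σ(B(w, r)) ≤ K r^d` for all radii: beyond the diameter, `Γ` is covered by a number of balls of
radius `diam Γ / 4` that depends only on `n`. Summing over dyadic annuli, such a growth bound gives
`∫_{B(w,R)} |y - w|^{-β} dσ(y) ≲ R^{d-β}` for `β < d`, and the same bound on the complement of
`B(w,R)` for `β > d`.

For a block `a` and `x ∈ Γ`, the Lipschitz bound near `x` (where `β = d + θ - 1 < d`) and the sup
bound away from `x` (where `β = d + θ > d`) give an inner integral `≲ ϱ^{-d/2-θ}`. When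
`|x - z| ≥ 2ϱ`, `a x = 0` and the inner integral is `≲ ϱ^{d/2} |x - z|^{-d-θ}`. In the outer
integral, `B(z, 2ϱ)` and its complement then each contribute `≲ ϱ^{d/2-θ}`, and
`d/2 - θ = d/p - d/2 - s`.
-/

open MeasureTheory Metric Set ENNReal

noncomputable section

abbrev Eucl (n : ℕ) := EuclideanSpace ℝ (Fin n)

variable {n : ℕ}

/-- The `d`-dimensional surface measure on `Γ`: Hausdorff measure `ℋ^d` restricted to `Γ`. -/
def sMeasure (d : ℝ) (Γ : Set (Eucl n)) : Measure (Eucl n) := (μH[d]).restrict Γ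

/-- `Γ` is `d`-Ahlfors regular with constant `𝒜`, for radii `r` with `ofReal r < R`. -/
def AhlforsRegularWithin (d 𝒜 : ℝ) (Γ : Set (Eucl n)) (R : ℝ≥0∞) : Prop :=
  ∀ x ∈ Γ, ∀ r : ℝ, 0 < r → ENNReal.ofReal r < R →
    ENNReal.ofReal (𝒜⁻¹ * r ^ d) ≤ sMeasure d Γ (ball x r) ∧
      sMeasure d Γ (ball x r) ≤ ENNReal.ofReal (𝒜 * r ^ d)

/-- A block in `Δ(z,ϱ) = Γ ∩ B(z,ϱ)`. -/
def IsBlock (Γ : Set (Eucl n)) (d : ℝ) (z : Eucl n) (ϱ : ℝ) (a : Eucl n → ℝ) : Prop :=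
  (∀ x, x ∉ Γ ∩ ball z ϱ → a x = 0) ∧
  (∀ x ∈ Γ, |a x| ≤ ϱ ^ (-(d / 2))) ∧
  (∀ x ∈ Γ, ∀ y ∈ Γ, |a x - a y| ≤ dist x y * ϱ ^ (-(d / 2) - 1))

/-- The `p`-th power of the Slobodeckij seminorm (double integral). -/
def sloboInt (d s p : ℝ) (σ : Measure (Eucl n)) (f : Eucl n → ℝ) : ℝ≥0∞ :=
  ∫⁻ x, ∫⁻ y, ENNReal.ofReal (|f x - f y| ^ p / dist x y ^ (d + p * s)) ∂σ ∂σ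

lemma setLIntegral_le_ofReal_mul_of_ae_le {X : Type*} [MeasurableSpace X] {μ : Measure X}
    {S : Set X} (hS : MeasurableSet S) {f : X → ℝ≥0∞} {g : X → ℝ} {c : ℝ} (hc : 0 ≤ c)
    (hfg : ∀ᵐ y ∂μ, y ∈ S → f y ≤ ENNReal.ofReal (c * g y)) :
    ∫⁻ y in S, f y ∂μ ≤ ENNReal.ofReal c * ∫⁻ y in S, ENNReal.ofReal (g y) ∂μ := by
  refine (setLIntegral_mono_ae' hS hfg).trans_eq ?_
  simp_rw [ENNReal.ofReal_mul hc]
  exact lintegral_const_mul' _ _ ENNReal.ofReal_ne_top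

lemma tsum_ofReal_mul_geometric (A : ℝ) {q : ℝ} (hq0 : 0 ≤ q) (hq1 : q < 1) :
    ∑' k : ℕ, ENNReal.ofReal (A * q ^ k) = ENNReal.ofReal (A / (1 - q)) := by
  have h1q : 1 - ENNReal.ofReal q = ENNReal.ofReal (1 - q) := by
    rw [ENNReal.ofReal_sub 1 hq0, ENNReal.ofReal_one]
  have hterm : ∀ k : ℕ, ENNReal.ofReal (A * q ^ k) = ENNReal.ofReal A * ENNReal.ofReal q ^ k :=
    fun k => by rw [ENNReal.ofReal_mul' (pow_nonneg hq0 k), ENNReal.ofReal_pow hq0]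
  rw [tsum_congr hterm, ENNReal.tsum_mul_left, ENNReal.tsum_geometric, h1q, div_eq_mul_inv,
    ENNReal.ofReal_mul' (inv_nonneg.2 (by linarith)), ENNReal.ofReal_inv_of_pos (by linarith)]

lemma rpow_neg_le_of_le_of_le_two_mul {r t : ℝ} (β : ℝ) (hr : 0 < r) (hrt : r ≤ t)
    (ht : t ≤ 2 * r) : t ^ (-β) ≤ 2 ^ |β| * r ^ (-β) := by
  have ht1 : 1 ≤ t / r := (one_le_div hr).2 hrt
  calc t ^ (-β) = (t / r) ^ (-β) * r ^ (-β) := by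
        rw [Real.div_rpow (by linarith) hr.le, div_mul_cancel₀ _ (Real.rpow_pos_of_pos hr _).ne']
    _ ≤ (t / r) ^ |β| * r ^ (-β) := by
        gcongr
        exact neg_le_abs β
    _ ≤ 2 ^ |β| * r ^ (-β) := by
        gcongr
        exact (div_le_iff₀ hr).2 ht

section Shells

variable {X : Type*} [MetricSpace X] [MeasurableSpace X] [OpensMeasurableSpace X]
  {μ : Measure X} {w : X} {K d β : ℝ}

lemma setLIntegral_shell_rpow_neg_dist_le
    (hμ : ∀ r > 0, μ (ball w r) ≤ ENNReal.ofReal (K * r ^ d)) {r : ℝ} (hr : 0 < r) :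
    ∫⁻ y in closedBall w (2 * r) \ ball w r, ENNReal.ofReal (dist y w ^ (-β)) ∂μ ≤
      ENNReal.ofReal (2 ^ |β| * 4 ^ d * K * r ^ (d - β)) := by
  have hbound : ∀ y ∈ closedBall w (2 * r) \ ball w r,
      ENNReal.ofReal (dist y w ^ (-β)) ≤ ENNReal.ofReal (2 ^ |β| * r ^ (-β)) := by
    rintro y ⟨hy2, hy1⟩
    exact ENNReal.ofReal_le_ofReal (rpow_neg_le_of_le_of_le_two_mul β hr
      (not_lt.1 hy1) (mem_closedBall.1 hy2))
  have hsub : closedBall w (2 * r) \ ball w r ⊆ ball w (4 * r) :=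
    sdiff_subset.trans (closedBall_subset_ball (by linarith))
  calc _ ≤ ∫⁻ _ in closedBall w (2 * r) \ ball w r, ENNReal.ofReal (2 ^ |β| * r ^ (-β)) ∂μ :=
        setLIntegral_mono' (measurableSet_closedBall.diff measurableSet_ball) hbound
    _ ≤ ENNReal.ofReal (2 ^ |β| * r ^ (-β)) * ENNReal.ofReal (K * (4 * r) ^ d) := by
        rw [setLIntegral_const]
        gcongr
        exact (measure_mono hsub).trans (hμ _ (by linarith))
    _ = ENNReal.ofReal (2 ^ |β| * 4 ^ d * K * r ^ (d - β)) := by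
        rw [← ENNReal.ofReal_mul (by positivity), Real.mul_rpow (by norm_num) hr.le,
          Real.rpow_sub hr, Real.rpow_neg hr.le]
        ring_nf

lemma setLIntegral_rpow_neg_dist_le_of_subset_shells
    (hμ : ∀ r > 0, μ (ball w r) ≤ ENNReal.ofReal (K * r ^ d)) {r : ℕ → ℝ} (hr : ∀ k, 0 < r k)
    {S : Set X} (hS : S ⊆ ⋃ k, closedBall w (2 * r k) \ ball w (r k)) {c q : ℝ}
    (hq0 : 0 ≤ q) (hq1 : q < 1) (hrq : ∀ k, r k ^ (d - β) = c * q ^ k) :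
    ∫⁻ y in S, ENNReal.ofReal (dist y w ^ (-β)) ∂μ ≤
      ENNReal.ofReal (2 ^ |β| * 4 ^ d * K * c / (1 - q)) := by
  calc _ ≤ ∑' k, ∫⁻ y in closedBall w (2 * r k) \ ball w (r k),
          ENNReal.ofReal (dist y w ^ (-β)) ∂μ :=
        (lintegral_mono_set hS).trans (lintegral_iUnion_le _ _)
    _ ≤ ∑' k, ENNReal.ofReal (2 ^ |β| * 4 ^ d * K * c * q ^ k) := by
        gcongr with k
        rw [mul_assoc _ c, ← hrq]
        exact setLIntegral_shell_rpow_neg_dist_le hμ (hr k)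
    _ = _ := tsum_ofReal_mul_geometric _ hq0 hq1

def nearConst (d β : ℝ) : ℝ := 2 ^ |β| * 4 ^ d * 2 ^ (β - d) / (1 - 2 ^ (β - d))

def farConst (d β : ℝ) : ℝ := 2 ^ |β| * 4 ^ d / (1 - 2 ^ (d - β))

lemma nearConst_pos (hβ : β < d) : 0 < nearConst d β := by
  have : (2 : ℝ) ^ (β - d) < 1 := Real.rpow_lt_one_of_one_lt_of_neg one_lt_two (by linarith)
  unfold nearConst
  have : 0 < 1 - (2 : ℝ) ^ (β - d) := by linarith
  positivity

lemma farConst_pos (hβ : d < β) : 0 < farConst d β := by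
  have : (2 : ℝ) ^ (d - β) < 1 := Real.rpow_lt_one_of_one_lt_of_neg one_lt_two (by linarith)
  unfold farConst
  have : 0 < 1 - (2 : ℝ) ^ (d - β) := by linarith
  positivity

lemma setLIntegral_closedBall_diff_rpow_neg_dist_le
    (hμ : ∀ r > 0, μ (ball w r) ≤ ENNReal.ofReal (K * r ^ d)) (hβ : β < d) {R : ℝ} (hR : 0 < R) :
    ∫⁻ y in closedBall w R \ {w}, ENNReal.ofReal (dist y w ^ (-β)) ∂μ ≤
      ENNReal.ofReal (nearConst d β * K * R ^ (d - β)) := by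
  have hcover : closedBall w R \ {w} ⊆ ⋃ k : ℕ, closedBall w (2 * (R / 2 ^ (k + 1))) \
      ball w (R / 2 ^ (k + 1)) := by
    rintro y ⟨hyR, hyw⟩
    have hpos : 0 < dist y w := dist_pos.2 hyw
    obtain ⟨k, hk1, hk2⟩ := exists_nat_pow_near ((one_le_div hpos).2 (mem_closedBall.1 hyR))
      one_lt_two
    refine mem_iUnion.2 ⟨k, mem_closedBall.2 ?_, fun h => ?_⟩
    · rw [pow_succ, ← div_div, mul_div_cancel₀ _ two_ne_zero, le_div_iff₀ (by positivity),
        mul_comm, ← le_div_iff₀ hpos]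
      exact hk1
    · rw [mem_ball, lt_div_iff₀ (by positivity), mul_comm, ← lt_div_iff₀ hpos] at h
      linarith
  have h2 : (0 : ℝ) < 2 := two_pos
  refine (setLIntegral_rpow_neg_dist_le_of_subset_shells hμ (fun k => by positivity) hcover
    (c := R ^ (d - β) * 2 ^ (β - d)) (q := 2 ^ (β - d)) (Real.rpow_nonneg h2.le _)
    (Real.rpow_lt_one_of_one_lt_of_neg one_lt_two (by linarith)) fun k => ?_).trans_eq ?_
  · rw [Real.div_rpow hR.le (by positivity), div_eq_mul_inv, ← Real.rpow_neg (by positivity),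
      ← Real.rpow_natCast, ← Real.rpow_mul h2.le, ← Real.rpow_mul_natCast h2.le, mul_assoc,
      ← Real.rpow_add h2]
    push_cast
    ring_nf
  · rw [nearConst]
    ring_nf

lemma setLIntegral_compl_ball_rpow_neg_dist_le
    (hμ : ∀ r > 0, μ (ball w r) ≤ ENNReal.ofReal (K * r ^ d)) (hβ : d < β) {R : ℝ} (hR : 0 < R) :
    ∫⁻ y in (ball w R)ᶜ, ENNReal.ofReal (dist y w ^ (-β)) ∂μ ≤
      ENNReal.ofReal (farConst d β * K * R ^ (d - β)) := by
  have hcover : (ball w R)ᶜ ⊆ ⋃ k : ℕ, closedBall w (2 * (R * 2 ^ k)) \ ball w (R * 2 ^ k) := by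
    intro y hy
    have hRy : R ≤ dist y w := not_lt.1 hy
    obtain ⟨k, hk1, hk2⟩ := exists_nat_pow_near ((one_le_div hR).2 hRy) one_lt_two
    refine mem_iUnion.2 ⟨k, mem_closedBall.2 ?_, fun h => ?_⟩
    · rw [div_lt_iff₀ hR, pow_succ] at hk2
      linarith
    · rw [le_div_iff₀ hR] at hk1
      rw [mem_ball] at h
      linarith
  have h2 : (0 : ℝ) < 2 := two_pos
  refine (setLIntegral_rpow_neg_dist_le_of_subset_shells hμ (fun k => by positivity) hcover
    (c := R ^ (d - β)) (q := 2 ^ (d - β)) (Real.rpow_nonneg h2.le _)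
    (Real.rpow_lt_one_of_one_lt_of_neg one_lt_two (by linarith)) fun k => ?_).trans_eq ?_
  · rw [Real.mul_rpow hR.le (by positivity), ← Real.rpow_natCast, ← Real.rpow_mul h2.le,
      ← Real.rpow_mul_natCast h2.le, mul_comm (k : ℝ)]
  · rw [farConst]
    ring_nf

end Shells

open scoped Pointwise in
lemma closedBall_subset_biUnion_ball_of_unit {E : Type*} [NormedAddCommGroup E] [NormedSpace ℝ E]
    {t : Finset E} (ht : closedBall (0 : E) 1 ⊆ ⋃ c ∈ t, ball c (1 / 4)) (w : E) {D : ℝ}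
    (hD : 0 < D) : closedBall w D ⊆ ⋃ c ∈ t, ball (w + D • c) (D / 4) := by
  have hnorm : ‖D‖ = D := by rw [Real.norm_eq_abs, abs_of_pos hD]
  calc closedBall w D = w +ᵥ D • closedBall (0 : E) 1 := by
        rw [_root_.smul_closedBall _ _ zero_le_one, vadd_closedBall, smul_zero, vadd_eq_add,
          add_zero, hnorm, mul_one]
    _ ⊆ w +ᵥ D • ⋃ c ∈ t, ball c (1 / 4) := vadd_set_mono (smul_set_mono ht)
    _ = ⋃ c ∈ t, ball (w + D • c) (D / 4) := by
        simp_rw [smul_set_iUnion₂, vadd_set_iUnion₂, _root_.smul_ball hD.ne', vadd_ball,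
          vadd_eq_add, hnorm, mul_one_div]

lemma sMeasure_ball_le_of_ahlforsRegularWithin {d 𝒜 : ℝ} (hd : 0 ≤ d) (h𝒜 : 0 ≤ 𝒜)
    {Γ : Set (Eucl n)} (hreg : AhlforsRegularWithin d 𝒜 Γ (ediam Γ)) (hD : 0 < diam Γ)
    (c : Eucl n) : sMeasure d Γ (ball c (diam Γ / 4)) ≤ ENNReal.ofReal (𝒜 * diam Γ ^ d) := by
  rcases (ball c (diam Γ / 4) ∩ Γ).eq_empty_or_nonempty with hempty | ⟨w, hwc, hwΓ⟩
  · rw [sMeasure, Measure.restrict_apply measurableSet_ball, hempty, measure_empty]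
    exact zero_le
  have hsub : ball c (diam Γ / 4) ⊆ ball w (diam Γ / 2) := by
    refine ball_subset_ball' ?_
    rw [dist_comm]
    linarith [mem_ball.1 hwc]
  have hlt : ENNReal.ofReal (diam Γ / 2) < ediam Γ := by
    rw [ENNReal.ofReal_lt_iff_lt_toReal (by positivity) ((ENNReal.toReal_pos_iff.1 hD).2.ne)]
    exact half_lt_self hD
  calc sMeasure d Γ (ball c (diam Γ / 4)) ≤ sMeasure d Γ (ball w (diam Γ / 2)) := measure_mono hsub
    _ ≤ ENNReal.ofReal (𝒜 * (diam Γ / 2) ^ d) := (hreg w hwΓ _ (by positivity) hlt).2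
    _ ≤ ENNReal.ofReal (𝒜 * diam Γ ^ d) := by
        gcongr
        exact half_le_self hD.le

lemma sMeasure_univ_le_of_ahlforsRegularWithin {d 𝒜 : ℝ} (hd : 0 < d) (h𝒜 : 0 ≤ 𝒜)
    {t : Finset (Eucl n)} (ht : closedBall (0 : Eucl n) 1 ⊆ ⋃ c ∈ t, ball c (1 / 4))
    {Γ : Set (Eucl n)} (hreg : AhlforsRegularWithin d 𝒜 Γ (ediam Γ)) (hΓ : ediam Γ ≠ ⊤) :
    sMeasure d Γ univ ≤ ENNReal.ofReal (t.card * 𝒜 * diam Γ ^ d) := by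
  rcases Γ.eq_empty_or_nonempty with rfl | ⟨w, hw⟩
  · simp [sMeasure]
  rcases (diam_nonneg (s := Γ)).eq_or_lt with hD | hD
  · have hsingle : Γ.Subsingleton := by
      rw [← ediam_eq_zero_iff]
      exact (ENNReal.toReal_eq_zero_iff _).1 hD.symm |>.resolve_right hΓ
    have hd' : d = (d.toNNReal : ℝ) := (Real.coe_toNNReal d hd.le).symm
    rw [sMeasure, Measure.restrict_apply_univ, hd', hausdorffMeasure_of_dimH_lt]
    · exact zero_le
    · rw [dimH_subsingleton hsingle]
      exact_mod_cast Real.toNNReal_pos.2 hd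
  have hcover : Γ ⊆ ⋃ c ∈ t, ball (w + diam Γ • c) (diam Γ / 4) := fun y hy =>
    closedBall_subset_biUnion_ball_of_unit ht w hD
      (dist_le_diam_of_mem (isBounded_iff_ediam_ne_top.2 hΓ) hy hw)
  calc sMeasure d Γ univ ≤ sMeasure d Γ (⋃ c ∈ t, ball (w + diam Γ • c) (diam Γ / 4)) := by
        rw [sMeasure, Measure.restrict_apply_univ]
        exact (measure_mono (subset_inter hcover subset_rfl)).trans (Measure.le_restrict_apply _ _)
    _ ≤ ∑ c ∈ t, sMeasure d Γ (ball (w + diam Γ • c) (diam Γ / 4)) :=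
        measure_biUnion_finset_le t _
    _ ≤ t.card • ENNReal.ofReal (𝒜 * diam Γ ^ d) := Finset.sum_le_card_nsmul t _ _ fun c _ =>
        sMeasure_ball_le_of_ahlforsRegularWithin hd.le h𝒜 hreg hD _
    _ = ENNReal.ofReal (t.card * 𝒜 * diam Γ ^ d) := by
        rw [nsmul_eq_mul, mul_assoc, ENNReal.ofReal_mul (Nat.cast_nonneg _), ENNReal.ofReal_natCast]

lemma exists_sMeasure_ball_le {d 𝒜 : ℝ} (hd : 0 < d) (h𝒜 : 0 < 𝒜) :
    ∃ K > 0, ∀ Γ : Set (Eucl n), AhlforsRegularWithin d 𝒜 Γ (ediam Γ) →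
      ∀ w ∈ Γ, ∀ r > 0, sMeasure d Γ (ball w r) ≤ ENNReal.ofReal (K * r ^ d) := by
  obtain ⟨t, ht⟩ := (isCompact_closedBall (0 : Eucl n) 1).elim_finite_subcover
    (fun c => ball c (1 / 4)) (fun _ => isOpen_ball)
    (fun y _ => mem_iUnion.2 ⟨y, mem_ball_self (by norm_num)⟩)
  refine ⟨(t.card + 1) * 𝒜, by positivity, fun Γ hreg w hw r hr => ?_⟩
  by_cases hrD : ENNReal.ofReal r < ediam Γ
  · refine (hreg w hw r hr hrD).2.trans (ENNReal.ofReal_le_ofReal ?_)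
    have : 0 ≤ 𝒜 * r ^ d := by positivity
    nlinarith [(Nat.cast_nonneg t.card : (0 : ℝ) ≤ t.card)]
  replace hrD := not_lt.1 hrD
  have hΓ : ediam Γ ≠ ⊤ := ne_top_of_le_ne_top ENNReal.ofReal_ne_top hrD
  have hDr : diam Γ ≤ r := (ENNReal.toReal_le_of_le_ofReal hr.le hrD)
  calc sMeasure d Γ (ball w r) ≤ sMeasure d Γ univ := measure_mono (subset_univ _)
    _ ≤ ENNReal.ofReal (t.card * 𝒜 * diam Γ ^ d) :=
        sMeasure_univ_le_of_ahlforsRegularWithin hd h𝒜.le ht hreg hΓ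
    _ ≤ ENNReal.ofReal ((t.card + 1) * 𝒜 * r ^ d) := by
        gcongr
        linarith

def innerConst (d θ : ℝ) : ℝ := nearConst d (d + θ - 1) + 2 * farConst d (d + θ)

def blockConst (d θ : ℝ) : ℝ := 2 ^ d * (innerConst d θ + farConst d (d + θ))

lemma innerConst_pos {d θ : ℝ} (hθ0 : 0 < θ) (hθ1 : θ < 1) : 0 < innerConst d θ :=
  add_pos (nearConst_pos (by linarith)) (mul_pos two_pos (farConst_pos (by linarith)))

lemma blockConst_pos {d θ : ℝ} (hθ0 : 0 < θ) (hθ1 : θ < 1) : 0 < blockConst d θ :=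
  mul_pos (by positivity) (add_pos (innerConst_pos hθ0 hθ1) (farConst_pos (by linarith)))

namespace IsBlock

variable {Γ : Set (Eucl n)} {d θ ϱ : ℝ} {z x y : Eucl n} {a : Eucl n → ℝ}

lemma abs_le (ha : IsBlock Γ d z ϱ a) (hϱ : 0 < ϱ) (x : Eucl n) : |a x| ≤ ϱ ^ (-(d / 2)) := by
  by_cases hx : x ∈ Γ
  · exact ha.2.1 x hx
  · rw [ha.1 x fun h => hx h.1, abs_zero]
    positivity

lemma eq_zero_of_le_dist (ha : IsBlock Γ d z ϱ a) (h : ϱ ≤ dist x z) : a x = 0 :=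
  ha.1 x fun hx => not_lt.2 h (mem_ball.1 hx.2)

lemma div_le_of_dist_pos (ha : IsBlock Γ d z ϱ a) (hx : x ∈ Γ) (hy : y ∈ Γ)
    (hxy : 0 < dist y x) :
    |a x - a y| / dist x y ^ (d + θ) ≤ ϱ ^ (-(d / 2) - 1) * dist y x ^ (-(d + θ - 1)) := by
  rw [dist_comm] at hxy
  calc |a x - a y| / dist x y ^ (d + θ) ≤ dist x y * ϱ ^ (-(d / 2) - 1) / dist x y ^ (d + θ) := by
        gcongr
        exact ha.2.2 x hx y hy
    _ = ϱ ^ (-(d / 2) - 1) * dist y x ^ (-(d + θ - 1)) := by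
        rw [dist_comm y, show -(d + θ - 1) = 1 - (d + θ) by ring, Real.rpow_sub hxy,
          Real.rpow_one]
        ring

lemma div_le_of_le_dist (ha : IsBlock Γ d z ϱ a) (hϱ : 0 < ϱ) (hxy : ϱ ≤ dist y x) :
    |a x - a y| / dist x y ^ (d + θ) ≤ 2 * ϱ ^ (-(d / 2)) * dist y x ^ (-(d + θ)) := by
  have hpos : 0 < dist x y := by rw [dist_comm]; linarith
  calc |a x - a y| / dist x y ^ (d + θ) ≤ (|a x| + |a y|) / dist x y ^ (d + θ) := by
        gcongr
        exact abs_sub _ _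
    _ ≤ (ϱ ^ (-(d / 2)) + ϱ ^ (-(d / 2))) / dist x y ^ (d + θ) := by
        gcongr <;> exact ha.abs_le hϱ _
    _ = 2 * ϱ ^ (-(d / 2)) * dist y x ^ (-(d + θ)) := by
        rw [dist_comm y x, Real.rpow_neg hpos.le]
        ring

variable {μ : Measure (Eucl n)} {K : ℝ}

lemma lintegral_div_dist_rpow_le (ha : IsBlock Γ d z ϱ a) (hϱ : 0 < ϱ) (hθ0 : 0 < θ)
    (hθ1 : θ < 1) (hμΓ : ∀ᵐ y ∂μ, y ∈ Γ) (hK : 0 ≤ K)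
    (hμ : ∀ w ∈ Γ, ∀ r > 0, μ (ball w r) ≤ ENNReal.ofReal (K * r ^ d)) (hx : x ∈ Γ) :
    ∫⁻ y, ENNReal.ofReal (|a x - a y| / dist x y ^ (d + θ)) ∂μ ≤
      ENNReal.ofReal (innerConst d θ * K * ϱ ^ (-(d / 2) - θ)) := by
  set F : Eucl n → ℝ≥0∞ := fun y => ENNReal.ofReal (|a x - a y| / dist x y ^ (d + θ))
  have hcover : univ ⊆ {x} ∪ (closedBall x ϱ \ {x}) ∪ (ball x ϱ)ᶜ := by
    intro y _
    by_cases hyx : y = x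
    · exact Or.inl (Or.inl hyx)
    by_cases hy : y ∈ ball x ϱ
    · exact Or.inl (Or.inr ⟨ball_subset_closedBall hy, hyx⟩)
    · exact Or.inr hy
  have hnear : ∫⁻ y in closedBall x ϱ \ {x}, F y ∂μ ≤ ENNReal.ofReal (ϱ ^ (-(d / 2) - 1)) *
      ENNReal.ofReal (nearConst d (d + θ - 1) * K * ϱ ^ (d - (d + θ - 1))) := by
    refine (setLIntegral_le_ofReal_mul_of_ae_le
      (measurableSet_closedBall.diff (measurableSet_singleton x)) (by positivity)
      (hμΓ.mono fun y hy hyS => ENNReal.ofReal_le_ofReal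
        (ha.div_le_of_dist_pos hx hy (dist_pos.2 hyS.2)))).trans ?_
    gcongr
    exact setLIntegral_closedBall_diff_rpow_neg_dist_le (hμ x hx) (by linarith) hϱ
  have hfar : ∫⁻ y in (ball x ϱ)ᶜ, F y ∂μ ≤ ENNReal.ofReal (2 * ϱ ^ (-(d / 2))) *
      ENNReal.ofReal (farConst d (d + θ) * K * ϱ ^ (d - (d + θ))) := by
    refine (setLIntegral_le_ofReal_mul_of_ae_le measurableSet_ball.compl (by positivity)
      (ae_of_all _ fun y hy => ENNReal.ofReal_le_ofReal
        (ha.div_le_of_le_dist hϱ (not_lt.1 hy)))).trans ?_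
    gcongr
    exact setLIntegral_compl_ball_rpow_neg_dist_le (hμ x hx) (by linarith) hϱ
  have hnear_pow : ϱ ^ (-(d / 2) - 1) * ϱ ^ (d - (d + θ - 1)) = ϱ ^ (-(d / 2) - θ) := by
    rw [← Real.rpow_add hϱ]
    ring_nf
  have hfar_pow : ϱ ^ (-(d / 2)) * ϱ ^ (d - (d + θ)) = ϱ ^ (-(d / 2) - θ) := by
    rw [← Real.rpow_add hϱ]
    ring_nf
  have := nearConst_pos (d := d) (β := d + θ - 1) (by linarith)
  have := farConst_pos (d := d) (β := d + θ) (by linarith)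
  calc ∫⁻ y, F y ∂μ ≤ ∫⁻ y in {x} ∪ (closedBall x ϱ \ {x}) ∪ (ball x ϱ)ᶜ, F y ∂μ := by
        rw [← setLIntegral_univ]
        exact lintegral_mono_set hcover
    _ ≤ ∫⁻ y in {x}, F y ∂μ + ∫⁻ y in closedBall x ϱ \ {x}, F y ∂μ +
          ∫⁻ y in (ball x ϱ)ᶜ, F y ∂μ :=
        (lintegral_union_le _ _ _).trans (add_le_add_left (lintegral_union_le _ _ _) _)
    _ ≤ 0 + ENNReal.ofReal (ϱ ^ (-(d / 2) - 1)) *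
          ENNReal.ofReal (nearConst d (d + θ - 1) * K * ϱ ^ (d - (d + θ - 1))) +
          ENNReal.ofReal (2 * ϱ ^ (-(d / 2))) *
          ENNReal.ofReal (farConst d (d + θ) * K * ϱ ^ (d - (d + θ))) := by
        rw [lintegral_singleton]
        gcongr
        simp [F]
    _ = ENNReal.ofReal (innerConst d θ * K * ϱ ^ (-(d / 2) - θ)) := by
        rw [zero_add, ← ENNReal.ofReal_mul (by positivity), ← ENNReal.ofReal_mul (by positivity),
          ← ENNReal.ofReal_add (by positivity) (by positivity), innerConst]
        congr 1
        linear_combination (nearConst d (d + θ - 1) * K) * hnear_pow +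
          (2 * farConst d (d + θ) * K) * hfar_pow

lemma lintegral_div_dist_rpow_le_of_two_mul_le_dist (ha : IsBlock Γ d z ϱ a) (hϱ : 0 < ϱ)
    (hdθ : 0 ≤ d + θ) (hμz : ∀ r > 0, μ (ball z r) ≤ ENNReal.ofReal (K * r ^ d))
    (hx : 2 * ϱ ≤ dist x z) :
    ∫⁻ y, ENNReal.ofReal (|a x - a y| / dist x y ^ (d + θ)) ∂μ ≤
      ENNReal.ofReal (2 ^ (d + θ) * K * ϱ ^ (d / 2) * dist x z ^ (-(d + θ))) := by
  have hxz : 0 < dist x z := by linarith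
  set c := ϱ ^ (-(d / 2)) * (dist x z / 2) ^ (-(d + θ)) with hc
  have hpoint : ∀ y, ENNReal.ofReal (|a x - a y| / dist x y ^ (d + θ)) ≤
      (ball z ϱ).indicator (fun _ => ENNReal.ofReal c) y := by
    intro y
    have hax : a x = 0 := ha.eq_zero_of_le_dist (by linarith)
    by_cases hy : y ∈ ball z ϱ
    · have hxy : dist x z / 2 ≤ dist x y := by
        linarith [dist_triangle x y z, mem_ball.1 hy]
      rw [indicator_of_mem hy, hax, zero_sub, abs_neg, div_eq_mul_inv,
        ← Real.rpow_neg dist_nonneg]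
      refine ENNReal.ofReal_le_ofReal (mul_le_mul (ha.abs_le hϱ y) ?_ (by positivity)
        (by positivity))
      exact Real.rpow_le_rpow_of_nonpos (by positivity) hxy (by linarith)
    · rw [indicator_of_notMem hy, ha.eq_zero_of_le_dist (not_lt.1 hy), hax, sub_self, abs_zero,
        zero_div, ENNReal.ofReal_zero]
  calc _ ≤ ∫⁻ y, (ball z ϱ).indicator (fun _ => ENNReal.ofReal c) y ∂μ := lintegral_mono hpoint
    _ ≤ ENNReal.ofReal c * ENNReal.ofReal (K * ϱ ^ d) := by
        rw [lintegral_indicator_const measurableSet_ball]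
        gcongr
        exact hμz ϱ hϱ
    _ = _ := by
        rw [← ENNReal.ofReal_mul (by positivity)]
        congr 1
        have hϱ_pow : ϱ ^ (-(d / 2)) * ϱ ^ d = ϱ ^ (d / 2) := by
          rw [← Real.rpow_add hϱ]
          ring_nf
        have hhalf_pow : (dist x z / 2) ^ (-(d + θ)) = 2 ^ (d + θ) * dist x z ^ (-(d + θ)) := by
          rw [Real.div_rpow hxz.le zero_le_two, Real.rpow_neg zero_le_two, div_inv_eq_mul,
            mul_comm]
        rw [hc, hhalf_pow]
        linear_combination (2 ^ (d + θ) * K * dist x z ^ (-(d + θ))) * hϱ_pow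

theorem sloboInt_le (ha : IsBlock Γ d z ϱ a) (hϱ : 0 < ϱ) (hd : 0 ≤ d) (hθ0 : 0 < θ)
    (hθ1 : θ < 1) (hμΓ : ∀ᵐ y ∂μ, y ∈ Γ) (hK : 0 ≤ K)
    (hμ : ∀ w ∈ Γ, ∀ r > 0, μ (ball w r) ≤ ENNReal.ofReal (K * r ^ d)) (hz : z ∈ Γ) :
    sloboInt d θ 1 μ a ≤ ENNReal.ofReal (blockConst d θ * K ^ 2 * ϱ ^ (d / 2 - θ)) := by
  set G : Eucl n → ℝ≥0∞ := fun x => ∫⁻ y, ENNReal.ofReal (|a x - a y| / dist x y ^ (d + θ)) ∂μ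
  have hG : sloboInt d θ 1 μ a = ∫⁻ x, G x ∂μ := by
    simp only [sloboInt, Real.rpow_one, one_mul, G]
  have := innerConst_pos (d := d) hθ0 hθ1
  have := farConst_pos (d := d) (β := d + θ) (by linarith)
  have hnear : ∫⁻ x in ball z (2 * ϱ), G x ∂μ ≤
      ENNReal.ofReal (innerConst d θ * K * ϱ ^ (-(d / 2) - θ)) *
        ENNReal.ofReal (K * (2 * ϱ) ^ d) := by
    calc _ ≤ ∫⁻ _ in ball z (2 * ϱ), ENNReal.ofReal (innerConst d θ * K * ϱ ^ (-(d / 2) - θ)) ∂μ :=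
          setLIntegral_mono_ae' measurableSet_ball
            (hμΓ.mono fun x hx _ => ha.lintegral_div_dist_rpow_le hϱ hθ0 hθ1 hμΓ hK hμ hx)
      _ ≤ _ := by
          rw [setLIntegral_const]
          gcongr
          exact hμ z hz _ (by positivity)
  have hfar : ∫⁻ x in (ball z (2 * ϱ))ᶜ, G x ∂μ ≤
      ENNReal.ofReal (2 ^ (d + θ) * K * ϱ ^ (d / 2)) *
        ENNReal.ofReal (farConst d (d + θ) * K * (2 * ϱ) ^ (d - (d + θ))) := by
    refine (setLIntegral_le_ofReal_mul_of_ae_le measurableSet_ball.compl (by positivity)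
      (ae_of_all _ fun x hx => ha.lintegral_div_dist_rpow_le_of_two_mul_le_dist hϱ
        (by linarith) (hμ z hz) (not_lt.1 hx))).trans ?_
    gcongr
    exact setLIntegral_compl_ball_rpow_neg_dist_le (hμ z hz) (by linarith) (by positivity)
  have h₁ : ϱ ^ (-(d / 2) - θ) * ϱ ^ d = ϱ ^ (d / 2 - θ) := by
    rw [← Real.rpow_add hϱ]
    ring_nf
  have h₂ : ϱ ^ (d / 2) * ϱ ^ (d - (d + θ)) = ϱ ^ (d / 2 - θ) := by
    rw [← Real.rpow_add hϱ]
    ring_nf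
  have h₃ : (2 : ℝ) ^ (d + θ) * 2 ^ (d - (d + θ)) = 2 ^ d := by
    rw [← Real.rpow_add two_pos]
    ring_nf
  rw [hG, ← lintegral_add_compl G (measurableSet_ball (x := z) (ε := 2 * ϱ))]
  refine (add_le_add hnear hfar).trans_eq ?_
  rw [← ENNReal.ofReal_mul (by positivity), ← ENNReal.ofReal_mul (by positivity),
    ← ENNReal.ofReal_add (by positivity) (by positivity), Real.mul_rpow zero_le_two hϱ.le,
    Real.mul_rpow zero_le_two hϱ.le, blockConst]
  congr 1
  linear_combination (innerConst d θ * K ^ 2 * 2 ^ d) * h₁ +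
    (farConst d (d + θ) * K ^ 2 * 2 ^ (d + θ) * 2 ^ (d - (d + θ))) * h₂ +
    (farConst d (d + θ) * K ^ 2 * ϱ ^ (d / 2 - θ)) * h₃

end IsBlock

theorem statement8_general
    (n : ℕ) (d s p 𝒜 : ℝ) (hd0 : 0 < d)
    (hs0 : 0 < s) (hs1 : s ≤ 1) (hp0 : d / (d + s) < p) (hp1 : p < 1) (h𝒜 : 1 ≤ 𝒜) :
    ∃ C > (0:ℝ), ∀ Γ : Set (Eucl n), IsClosed Γ → Γ.Nonempty →
      AhlforsRegularWithin d 𝒜 Γ (EMetric.diam Γ) →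
      ∀ z ∈ Γ, ∀ ϱ : ℝ, 0 < ϱ → ∀ a : Eucl n → ℝ, IsBlock Γ d z ϱ a →
        sloboInt d (s + d - d / p) 1 (sMeasure d Γ) a ≤
          ENNReal.ofReal (C * ϱ ^ (d / p - d / 2 - s)) := by
  have hp : 0 < p := (div_pos hd0 (by linarith)).trans hp0
  have hθ0 : 0 < s + d - d / p := by
    have : d < p * (d + s) := (div_lt_iff₀ (by linarith)).1 hp0
    have : d / p < d + s := by rwa [div_lt_iff₀ hp, mul_comm]
    linarith
  have hθ1 : s + d - d / p < 1 := by
    have : d < d / p := by rw [lt_div_iff₀ hp]; nlinarith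
    linarith
  obtain ⟨K, hK, hμ⟩ := exists_sMeasure_ball_le (n := n) hd0 (by linarith : 0 < 𝒜)
  refine ⟨blockConst d (s + d - d / p) * K ^ 2, mul_pos (blockConst_pos hθ0 hθ1) (by positivity),
    fun Γ hΓ _ hreg z hz ϱ hϱ a ha => ?_⟩
  rw [show d / p - d / 2 - s = d / 2 - (s + d - d / p) by ring]
  exact ha.sloboInt_le hϱ hd0.le hθ0 hθ1 (ae_restrict_mem hΓ.measurableSet) hK.le (hμ Γ hreg) hz

/-- every block `a` in `Δ(z,ϱ)` on a `d`-Ahlfors regular set `Γ` satisfies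
`‖a‖_{Λ^{θ,1}(Γ)} ≤ C ϱ^{d/p - d/2 - s}`, where `θ = s + d - d/p`. -/
theorem statement8
    (n : ℕ) (hn : 1 ≤ n) (d s p 𝒜 : ℝ) (hd0 : 0 < d) (hdn : d < n)
    (hs0 : 0 < s) (hs1 : s ≤ 1) (hp0 : d / (d + s) < p) (hp1 : p < 1) (h𝒜 : 1 ≤ 𝒜) :
    ∃ C > (0:ℝ), ∀ Γ : Set (Eucl n), IsClosed Γ → Γ.Nonempty →
      AhlforsRegularWithin d 𝒜 Γ (EMetric.diam Γ) →
      ∀ z ∈ Γ, ∀ ϱ : ℝ, 0 < ϱ → ∀ a : Eucl n → ℝ, IsBlock Γ d z ϱ a →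
        sloboInt d (s + d - d / p) 1 (sMeasure d Γ) a ≤
          ENNReal.ofReal (C * ϱ ^ (d / p - d / 2 - s)) :=
  statement8_general n d s p 𝒜 hd0 hs0 hs1 hp0 hp1 h𝒜

end
end

section
/- Let n ≥ 1, 0 < d < n, and β > 0. Let Γ ⊆ ℝ^n be an unbounded closed set that is d-Ahlfors regular with constant 𝒜, the regularity bounds holding for all radii r > 0, with measure σ = ℋ^d restricted to Γ. Then there exists C ≥ 1, depending only on n, d, β, and 𝒜, such that for every x ∈ ℝ^n ∖ Γ: C^{−1} dist(x,Γ)^{−β} ≤ ∫_Γ |x−y|^{−d−β} dσ(y) ≤ C dist(x,Γ)^{−β}. Equivalently, the function D_β(x) = (∫_Γ |x−y|^{−d−β} dσ(y))^{−1/β} is comparable to dist(x,Γ) on ℝ^n ∖ Γ. -/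
open MeasureTheory Metric Set ENNReal

noncomputable section

variable {n : ℕ}

set_option maxHeartbeats 1000000 in
/-- cf. `DavFM19A`, Lemma 5.1: on an unbounded closed `d`-Ahlfors regular
set `Γ` (regular at all scales), `∫_Γ |x-y|^{-d-β} dσ(y) ≈ dist(x,Γ)^{-β}` for `x ∉ Γ`;
i.e. `D_β(x)` is comparable to `dist(x,Γ)`. -/
theorem statement11
    (n : ℕ) (hn : 1 ≤ n) (d β 𝒜 : ℝ) (hd0 : 0 < d) (hdn : d < n) (hβ : 0 < β)
    (h𝒜 : 1 ≤ 𝒜) :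
    ∃ C : ℝ, 1 ≤ C ∧
      ∀ Γ : Set (Eucl n), IsClosed Γ → ¬ Bornology.IsBounded Γ →
        AhlforsRegularWithin d 𝒜 Γ ⊤ →
        ∀ x : Eucl n, x ∉ Γ →
          ENNReal.ofReal (C⁻¹ * infDist x Γ ^ (-β)) ≤
              (∫⁻ y, ENNReal.ofReal (dist x y ^ (-(d + β))) ∂(sMeasure d Γ)) ∧
            (∫⁻ y, ENNReal.ofReal (dist x y ^ (-(d + β))) ∂(sMeasure d Γ)) ≤
              ENNReal.ofReal (C * infDist x Γ ^ (-β)) := by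
  have hdβ : 0 < d + β := by linarith
  set c : ℝ := 2 ^ (-β) with hcdef
  have hc0 : (0:ℝ) < c := Real.rpow_pos_of_pos two_pos _
  have hc1 : c < 1 := Real.rpow_lt_one_of_one_lt_of_neg one_lt_two (by linarith)
  have h3 : (1:ℝ) ≤ 3 ^ (d + β) := Real.one_le_rpow (by norm_num) hdβ.le
  set C₁ : ℝ := 𝒜 * 3 ^ (d + β) with hC₁def
  set C₂ : ℝ := 𝒜 * 2 ^ (2 * d) * (1 - c)⁻¹ with hC₂def
  have hC₁1 : 1 ≤ C₁ := by nlinarith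
  have hC₁0 : 0 < C₁ := by linarith
  refine ⟨max C₁ C₂, le_trans hC₁1 (le_max_left _ _), ?_⟩
  intro Γ hΓc hΓu hA x hx
  have hΓne : Γ.Nonempty :=
    Set.nonempty_iff_ne_empty.2 (fun h => hΓu (h ▸ Bornology.isBounded_empty))
  set δ := infDist x Γ with hδdef
  have hδ : 0 < δ := (hΓc.notMem_iff_infDist_pos hΓne).1 hx
  obtain ⟨p, hpΓ, hpd⟩ := hΓc.exists_infDist_eq_dist hΓne x
  have hxp : dist x p = δ := hpd.symm
  set f : Eucl n → ℝ≥0∞ := fun y => ENNReal.ofReal (dist x y ^ (-(d + β))) with hfdef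
  have hfm : Measurable f := by fun_prop
  have hδβ : (0:ℝ) ≤ δ ^ (-β) := Real.rpow_nonneg hδ.le _
  constructor
  · -- lower bound
    have key : ENNReal.ofReal ((3 * δ) ^ (-(d + β))) * ENNReal.ofReal (𝒜⁻¹ * δ ^ d) ≤
        ∫⁻ y, f y ∂(sMeasure d Γ) := by
      calc ENNReal.ofReal ((3 * δ) ^ (-(d + β))) * ENNReal.ofReal (𝒜⁻¹ * δ ^ d)
          ≤ ENNReal.ofReal ((3 * δ) ^ (-(d + β))) * sMeasure d Γ (ball p δ) :=
            mul_le_mul_right (hA p hpΓ δ hδ ENNReal.ofReal_lt_top).1 _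
        _ = ∫⁻ _ in ball p δ, ENNReal.ofReal ((3 * δ) ^ (-(d + β))) ∂(sMeasure d Γ) :=
            (setLIntegral_const _ _).symm
        _ ≤ ∫⁻ y in ball p δ, f y ∂(sMeasure d Γ) := by
            refine setLIntegral_mono hfm fun y hy => ?_
            have h1 : dist p y < δ := mem_ball'.1 hy
            have h2 : 0 < dist x y := by
              have := dist_triangle x y p
              rw [dist_comm y p] at this
              linarith [hxp ▸ this]
            have h3' : dist x y ≤ 3 * δ := by
              have t1 := dist_triangle x p y
              rw [hxp] at t1
              linarith
            exact ENNReal.ofReal_le_ofReal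
              (Real.rpow_le_rpow_of_nonpos h2 h3' (by linarith))
        _ ≤ ∫⁻ y, f y ∂(sMeasure d Γ) := setLIntegral_le_lintegral _ _
    refine le_trans ?_ key
    rw [← ENNReal.ofReal_mul (Real.rpow_nonneg (by positivity) _)]
    refine ENNReal.ofReal_le_ofReal ?_
    have heq : (3 * δ) ^ (-(d + β)) * (𝒜⁻¹ * δ ^ d) = C₁⁻¹ * δ ^ (-β) := by
      rw [Real.mul_rpow (by norm_num) hδ.le, hC₁def, mul_inv,
        ← Real.rpow_neg (by norm_num : (0:ℝ) ≤ 3),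
        show -β = -(d + β) + d by ring, Real.rpow_add hδ]
      ring
    rw [heq]
    have hinv : (max C₁ C₂)⁻¹ ≤ C₁⁻¹ := by
      apply inv_anti₀ hC₁0 (le_max_left _ _)
    exact mul_le_mul_of_nonneg_right hinv hδβ
  · -- upper bound
    set A : ℕ → Set (Eucl n) := fun k => ball x (2 ^ (k + 1) * δ) \ ball x (2 ^ k * δ)
      with hAdef
    have hAm : ∀ k, MeasurableSet (A k) := fun k =>
      measurableSet_ball.diff measurableSet_ball
    have hU : MeasurableSet (⋃ k, A k) := MeasurableSet.iUnion hAm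
    have hcover : Γ ⊆ ⋃ k, A k := by
      intro y hy
      have h1 : δ ≤ dist x y := infDist_le_dist_of_mem hy
      have hdy : 0 < dist x y := lt_of_lt_of_le hδ h1
      set t : ℝ := dist x y / δ with htdef
      have ht1 : 1 ≤ t := (one_le_div hδ).2 h1
      set m : ℕ := ⌊t⌋₊ with hmdef
      have hm1 : 1 ≤ m := Nat.le_floor (by exact_mod_cast ht1)
      set k : ℕ := Nat.log 2 m with hkdef
      refine mem_iUnion.2 ⟨k, ?_, ?_⟩
      · -- in big ball
        have h2 : m < 2 ^ (k + 1) := Nat.lt_pow_succ_log_self (by norm_num) m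
        have h3' : t < (m : ℝ) + 1 := Nat.lt_floor_add_one t
        have h4 : (m : ℝ) + 1 ≤ 2 ^ (k + 1) := by exact_mod_cast Nat.succ_le_of_lt h2
        have : dist x y < 2 ^ (k + 1) * δ := by
          have := lt_of_lt_of_le h3' h4
          rw [htdef, div_lt_iff₀ hδ] at this
          linarith
        rw [mem_ball, dist_comm]
        exact this
      · -- not in small ball
        have h2 : (2:ℕ) ^ k ≤ m := Nat.pow_log_le_self 2 (by omega)
        have h3' : (m : ℝ) ≤ t := Nat.floor_le (by positivity)
        have h4 : (2:ℝ) ^ k ≤ t := le_trans (by exact_mod_cast h2) h3'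
        have : 2 ^ k * δ ≤ dist x y := by
          rw [htdef, le_div_iff₀ hδ] at h4
          linarith
        rw [mem_ball, dist_comm]
        exact not_lt.2 this
    have hσc : sMeasure d Γ ((⋃ k, A k)ᶜ) = 0 := by
      rw [sMeasure, Measure.restrict_apply hU.compl]
      refine measure_mono_null (fun y hy => ?_) measure_empty
      exact hy.1 (hcover hy.2)
    have hmeasA : ∀ k : ℕ, sMeasure d Γ (A k) ≤
        ENNReal.ofReal (𝒜 * (2 ^ (k + 2) * δ) ^ d) := by
      intro k
      have hsub : A k ⊆ ball p (2 ^ (k + 2) * δ) := by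
        intro y hy
        have h1 : dist y x < 2 ^ (k + 1) * δ := mem_ball.1 hy.1
        have h2 : dist y p ≤ dist y x + dist x p := dist_triangle y x p
        have h3' : (2:ℝ) ^ (k + 1) * δ + δ ≤ 2 ^ (k + 2) * δ := by
          have : (2:ℝ) ^ (k + 1) + 1 ≤ 2 ^ (k + 2) := by
            have h2k : (1:ℝ) ≤ 2 ^ (k + 1) := one_le_pow₀ (by norm_num)
            calc (2:ℝ) ^ (k + 1) + 1 ≤ 2 ^ (k + 1) + 2 ^ (k + 1) := by linarith
              _ = 2 ^ (k + 2) := by ring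
          nlinarith
        rw [mem_ball]
        rw [hxp] at h2
        linarith
      calc sMeasure d Γ (A k) ≤ sMeasure d Γ (ball p (2 ^ (k + 2) * δ)) :=
            measure_mono hsub
        _ ≤ ENNReal.ofReal (𝒜 * (2 ^ (k + 2) * δ) ^ d) :=
            (hA p hpΓ _ (by positivity) ENNReal.ofReal_lt_top).2
    have hterm : ∀ k : ℕ, (2 ^ k * δ) ^ (-(d + β)) * (𝒜 * (2 ^ (k + 2) * δ) ^ d) =
        (𝒜 * 2 ^ (2 * d) * δ ^ (-β)) * c ^ k := by
      intro k
      have h2k : (0:ℝ) ≤ (2:ℝ) ^ k := by positivity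
      have h2k2 : (0:ℝ) ≤ (2:ℝ) ^ (k + 2) := by positivity
      rw [Real.mul_rpow h2k hδ.le, Real.mul_rpow h2k2 hδ.le,
        ← Real.rpow_natCast (2:ℝ) k, ← Real.rpow_natCast (2:ℝ) (k + 2),
        ← Real.rpow_natCast c k, hcdef,
        ← Real.rpow_mul (by norm_num : (0:ℝ) ≤ 2),
        ← Real.rpow_mul (by norm_num : (0:ℝ) ≤ 2),
        ← Real.rpow_mul (by norm_num : (0:ℝ) ≤ 2)]
      have e1 : (2:ℝ) ^ ((k:ℝ) * -(d + β)) * 2 ^ (((k:ℝ) + 2) * d) =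
          2 ^ (2 * d) * 2 ^ (-β * (k:ℝ)) := by
        rw [← Real.rpow_add two_pos, ← Real.rpow_add two_pos]
        congr 1
        push_cast
        ring
      have e2 : δ ^ (-(d + β)) * δ ^ d = δ ^ (-β) := by
        rw [← Real.rpow_add hδ]
        congr 1
        ring
      push_cast
      calc (2:ℝ) ^ ((k:ℝ) * -(d + β)) * δ ^ (-(d + β)) * (𝒜 * (2 ^ (((k:ℝ) + 2) * d) * δ ^ d))
          = 𝒜 * ((2:ℝ) ^ ((k:ℝ) * -(d + β)) * 2 ^ (((k:ℝ) + 2) * d)) *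
              (δ ^ (-(d + β)) * δ ^ d) := by ring
        _ = 𝒜 * (2 ^ (2 * d) * 2 ^ (-β * (k:ℝ))) * δ ^ (-β) := by rw [e1, e2]
        _ = 𝒜 * 2 ^ (2 * d) * δ ^ (-β) * 2 ^ (-β * (k:ℝ)) := by ring
    calc ∫⁻ y, f y ∂(sMeasure d Γ)
        = (∫⁻ y in ⋃ k, A k, f y ∂(sMeasure d Γ)) +
            ∫⁻ y in (⋃ k, A k)ᶜ, f y ∂(sMeasure d Γ) := (lintegral_add_compl f hU).symm
      _ = ∫⁻ y in ⋃ k, A k, f y ∂(sMeasure d Γ) := by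
          rw [setLIntegral_measure_zero _ _ hσc, add_zero]
      _ ≤ ∑' k, ∫⁻ y in A k, f y ∂(sMeasure d Γ) := lintegral_iUnion_le _ _
      _ ≤ ∑' k : ℕ, ENNReal.ofReal ((2 ^ k * δ) ^ (-(d + β))) *
            ENNReal.ofReal (𝒜 * (2 ^ (k + 2) * δ) ^ d) := by
          refine ENNReal.tsum_le_tsum fun k => ?_
          calc ∫⁻ y in A k, f y ∂(sMeasure d Γ)
              ≤ ∫⁻ _ in A k, ENNReal.ofReal ((2 ^ k * δ) ^ (-(d + β)))
                  ∂(sMeasure d Γ) := by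
                refine setLIntegral_mono measurable_const fun y hy => ?_
                have h1 : ¬ dist y x < 2 ^ k * δ := fun h => hy.2 (mem_ball.2 h)
                have h2 : (2:ℝ) ^ k * δ ≤ dist x y := by
                  rw [dist_comm]; exact not_lt.1 h1
                exact ENNReal.ofReal_le_ofReal
                  (Real.rpow_le_rpow_of_nonpos (by positivity) h2 (by linarith))
            _ = ENNReal.ofReal ((2 ^ k * δ) ^ (-(d + β))) * sMeasure d Γ (A k) :=
                setLIntegral_const _ _
            _ ≤ ENNReal.ofReal ((2 ^ k * δ) ^ (-(d + β))) *
                  ENNReal.ofReal (𝒜 * (2 ^ (k + 2) * δ) ^ d) :=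
                mul_le_mul_right (hmeasA k) _
      _ = ∑' k : ℕ, ENNReal.ofReal (𝒜 * 2 ^ (2 * d) * δ ^ (-β)) *
            (ENNReal.ofReal c) ^ k := by
          refine tsum_congr fun k => ?_
          rw [← ENNReal.ofReal_mul (Real.rpow_nonneg (by positivity) _), hterm k,
            ENNReal.ofReal_mul (by positivity), ← ENNReal.ofReal_pow hc0.le]
      _ = ENNReal.ofReal (𝒜 * 2 ^ (2 * d) * δ ^ (-β)) * (1 - ENNReal.ofReal c)⁻¹ := by
          rw [ENNReal.tsum_mul_left, ENNReal.tsum_geometric]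
      _ = ENNReal.ofReal (𝒜 * 2 ^ (2 * d) * δ ^ (-β)) * ENNReal.ofReal (1 - c)⁻¹ := by
          rw [← ENNReal.ofReal_one, ← ENNReal.ofReal_sub _ hc0.le,
            ENNReal.ofReal_inv_of_pos (by linarith)]
      _ ≤ ENNReal.ofReal (max C₁ C₂ * δ ^ (-β)) := by
          rw [← ENNReal.ofReal_mul (by positivity)]
          refine ENNReal.ofReal_le_ofReal ?_
          have : 𝒜 * 2 ^ (2 * d) * δ ^ (-β) * (1 - c)⁻¹ = C₂ * δ ^ (-β) := by
            rw [hC₂def]; ring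
          rw [this]
          exact mul_le_mul_of_nonneg_right (le_max_right _ _) hδβ

end
end

section
/- Let n ≥ 2 and let d be a real number with 0 < d < n−1. Let Ω ⊆ ℝ^n be a nonempty open set with Ω ≠ ℝ^n whose boundary ∂Ω is d-Ahlfors regular with constant 𝒜. Then Ω satisfies the interior corkscrew condition with a constant κ ∈ (0,1) depending only on n, d, and 𝒜. -/
open MeasureTheory Metric Set ENNReal

noncomputable section

variable {n : ℕ}

/-- The interior corkscrew condition with constant `κ`. -/
def CorkscrewCond (κ : ℝ) (Ω : Set (Eucl n)) : Prop :=
  ∀ x ∈ frontier Ω, ∀ r : ℝ, 0 < r → ENNReal.ofReal r < EMetric.diam Ω →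
    ∃ z ∈ ball x r, ball z (κ * r) ⊆ Ω

/-! Since `d < n - 1` and `∂Ω` has locally finite `ℋ^d` measure, `ℋ^(n-1)(∂Ω) = 0`, so `∂Ω`
cannot separate two balls: every segment parallel to `b - a` from a ball `B(a, ρ) ⊆ Ωᶜ` to
`B(b, ρ) ⊆ Ω` would cross `∂Ω`, and the orthogonal projection of `∂Ω` onto `(b - a)ᗮ` would then
cover an `(n-1)`-dimensional ball. Hence `Ω` is dense and `Ω = ℝⁿ \ ∂Ω`, so a corkscrew ball is
any ball missing `∂Ω`. If `∂Ω` has diameter at most `r/2`, it lies in `B(x, r/2)` and a ball of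
radius `r/4` centred at distance `3r/4` from `x` works. Otherwise, if every point of `B(x, t/4)`
(`t = r/2`) were `ε`-close to `∂Ω`, averaging `σ(B(z, 2ε))` over `z ∈ B(x, t/4)` would give
`ε^d tⁿ ≲ εⁿ t^d`, which fails for `ε = c t` with `c` small, because `d < n`. -/

open Module

theorem IsPreconnected.inter_frontier_nonempty {X : Type*} [TopologicalSpace X] {s t : Set X}
    (hs : IsPreconnected s) (hst : (s ∩ t).Nonempty) (hst' : (s \ t).Nonempty) :
    (s ∩ frontier t).Nonempty := by
  by_contra h
  have hsub : s ⊆ interior t ∪ interior tᶜ := fun x hx => by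
    by_contra hx'
    simp only [mem_union, interior_compl, not_or, mem_compl_iff, not_not] at hx'
    exact h ⟨x, hx, hx'.2, hx'.1⟩
  have hint : ∀ x ∈ s, x ∈ t → x ∈ interior t := fun x hx hxt =>
    (hsub hx).resolve_right fun hx' => interior_subset hx' hxt
  have hint' : ∀ x ∈ s, x ∉ t → x ∈ interior tᶜ := fun x hx hxt =>
    (hsub hx).resolve_left fun hx' => hxt (interior_subset hx')
  obtain ⟨x, -, hx, hx'⟩ := hs _ _ isOpen_interior isOpen_interior hsub
    (hst.imp fun x hx => ⟨hx.1, hint x hx.1 hx.2⟩) (hst'.imp fun x hx => ⟨hx.1, hint' x hx.1 hx.2⟩)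
  exact interior_subset hx' (interior_subset hx)

section Separation

variable {E : Type*} [NormedAddCommGroup E] [InnerProductSpace ℝ E]

theorem exists_mem_frontier_starProjection_eq {Ω : Set E} {a b v : E} {ρ : ℝ}
    (ha : ball a ρ ⊆ Ωᶜ) (hb : ball b ρ ⊆ Ω) (hv : v ∈ (ℝ ∙ (b - a))ᗮ) (hvρ : ‖v‖ < ρ) :
    ∃ g ∈ frontier Ω ∩ closedBall a (dist a b + ρ),
      (ℝ ∙ (b - a))ᗮ.starProjection g = (ℝ ∙ (b - a))ᗮ.starProjection a + v := by
  obtain ⟨g, hgseg, hgΩ⟩ :=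
    (convex_segment (a + v) (b + v)).isPreconnected.inter_frontier_nonempty
    ⟨b + v, right_mem_segment _ _ _, hb (by simpa using hvρ)⟩
    ⟨a + v, left_mem_segment _ _ _, ha (by simpa using hvρ)⟩
  rw [segment_eq_image'] at hgseg
  obtain ⟨t, ⟨ht0, ht1⟩, hgt⟩ := hgseg
  have hg : g = a + (v + t • (b - a)) := by
    rw [← hgt, add_sub_add_right_eq_sub]; exact add_assoc _ _ _
  refine ⟨g, ⟨hgΩ, ?_⟩, ?_⟩
  · rw [hg, mem_closedBall, dist_self_add_left]
    calc ‖v + t • (b - a)‖ ≤ ‖v‖ + t * ‖b - a‖ := by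
          simpa [norm_smul, abs_of_nonneg ht0] using norm_add_le v (t • (b - a))
      _ ≤ dist a b + ρ := by
          rw [dist_eq_norm']
          nlinarith [norm_nonneg (b - a)]
  · rw [hg, map_add, map_add, map_smul,
      Submodule.starProjection_orthogonalComplement_singleton_eq_zero, smul_zero, add_zero,
      Submodule.starProjection_eq_self_iff.mpr hv]

variable [FiniteDimensional ℝ E] [MeasurableSpace E] [BorelSpace E]

theorem hausdorffMeasure_frontier_inter_closedBall_pos {Ω : Set E} {a b : E} {ρ : ℝ}
    (hρ : 0 < ρ) (ha : ball a ρ ⊆ Ωᶜ) (hb : ball b ρ ⊆ Ω) :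
    0 < μH[(finrank ℝ E : ℝ) - 1] (frontier Ω ∩ closedBall a (dist a b + ρ)) := by
  set W := (ℝ ∙ (b - a))ᗮ
  set S := frontier Ω ∩ closedBall a (dist a b + ρ)
  have hab : b - a ≠ 0 :=
    sub_ne_zero.mpr fun hab => ha (mem_ball_self hρ) (hab ▸ hb (mem_ball_self hρ))
  have hW : ((finrank ℝ W : ℕ) : ℝ) = (finrank ℝ E : ℝ) - 1 := by
    have h := (ℝ ∙ (b - a)).finrank_add_finrank_orthogonal
    rw [finrank_span_singleton hab] at h
    rw [← h]; push_cast; ring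
  have hm : (0 : ℝ) ≤ (finrank ℝ E : ℝ) - 1 := by
    rw [← hW]; positivity
  set ψ : W → E := fun v => W.starProjection a + v
  have hψ : Isometry ψ := Isometry.of_dist_eq fun v w => by
    simp only [ψ, dist_add_left]; rfl
  have hcover : ψ '' ball 0 ρ ⊆ W.starProjection '' S := by
    rintro _ ⟨v, hv, rfl⟩
    rw [mem_ball_zero_iff] at hv
    obtain ⟨g, hg, hgv⟩ := exists_mem_frontier_starProjection_eq ha hb v.2 hv
    exact ⟨g, hg, hgv⟩
  refine (measure_ball_pos μH[finrank ℝ W] (0 : W) hρ).trans_le ?_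
  calc μH[finrank ℝ W] (ball (0 : W) ρ) = μH[(finrank ℝ E : ℝ) - 1] (ψ '' ball 0 ρ) := by
        rw [hψ.hausdorffMeasure_image (Or.inl hm), hW]
    _ ≤ μH[(finrank ℝ E : ℝ) - 1] (W.starProjection '' S) := measure_mono hcover
    _ ≤ μH[(finrank ℝ E : ℝ) - 1] S := by
        simpa using W.lipschitzWith_starProjection.hausdorffMeasure_image_le hm S

end Separation

theorem AhlforsRegularWithin.hausdorffMeasure_inter_closedBall_lt_top {d 𝒜 : ℝ} (hd : 0 < d)
    {Γ : Set (Eucl n)} (hreg : AhlforsRegularWithin d 𝒜 Γ (ediam Γ)) (a : Eucl n) (R : ℝ) :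
    μH[d] (Γ ∩ closedBall a R) < ⊤ := by
  rcases eq_or_ne (ediam Γ) 0 with hdiam | hdiam
  · have := Measure.nullSingletonClass_hausdorff (Eucl n) hd
    rw [((ediam_eq_zero_iff.mp hdiam).anti inter_subset_left).measure_zero]
    exact ENNReal.zero_lt_top
  obtain ⟨t, -, ht, htΓ⟩ := ENNReal.lt_iff_exists_real_btwn.mp (pos_iff_ne_zero.mpr hdiam)
  rw [ENNReal.ofReal_pos] at ht
  obtain ⟨c, hc, hcfin, hcover⟩ := exists_finite_cover_balls_of_isCompact_closure
    ((isCompact_closedBall a R).closure_of_subset inter_subset_right) ht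
  calc μH[d] (Γ ∩ closedBall a R) ≤ μH[d] (⋃ y ∈ c, Γ ∩ ball y t) :=
        measure_mono fun w hw => by
          obtain ⟨y, hy, hwy⟩ := mem_iUnion₂.mp (hcover hw)
          exact mem_iUnion₂.mpr ⟨y, hy, hw.1, hwy⟩
    _ ≤ ∑' y : c, μH[d] (Γ ∩ ball y t) := measure_biUnion_le _ hcfin.countable _
    _ < ⊤ := by
        have := hcfin.fintype
        rw [tsum_fintype]
        refine ENNReal.sum_lt_top.mpr fun y _ => ?_
        rw [inter_comm, ← Measure.restrict_apply measurableSet_ball]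
        exact ((hreg y (hc y.2).1 t ht htΓ).2).trans_lt ofReal_lt_top

theorem AhlforsRegularWithin.dense {d 𝒜 : ℝ} (hd0 : 0 < d) (hdn : d < (n : ℝ) - 1)
    {Ω : Set (Eucl n)} (hΩ : IsOpen Ω) (hne : Ω.Nonempty)
    (hreg : AhlforsRegularWithin d 𝒜 (frontier Ω) (ediam (frontier Ω))) : Dense Ω := by
  rw [← compl_compl Ω, ← interior_eq_empty_iff_dense_compl, ← not_nonempty_iff_eq_empty]
  rintro ⟨a, ha⟩
  obtain ⟨b, hb⟩ := hne
  obtain ⟨ρa, hρa, hbal⟩ := Metric.isOpen_iff.mp isOpen_interior a ha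
  obtain ⟨ρb, hρb, hbbl⟩ := Metric.isOpen_iff.mp hΩ b hb
  have hpos := hausdorffMeasure_frontier_inter_closedBall_pos (lt_min hρa hρb)
    ((ball_subset_ball (min_le_left _ _)).trans (hbal.trans interior_subset))
    ((ball_subset_ball (min_le_right _ _)).trans hbbl)
  rw [finrank_euclideanSpace_fin] at hpos
  have hzero := (Measure.hausdorffMeasure_zero_or_top hdn _).resolve_right
    (hreg.hausdorffMeasure_inter_closedBall_lt_top hd0 a (dist a b + min ρa ρb)).ne
  exact hpos.ne' hzero

theorem Dense.frontier_eq_compl {X : Type*} [TopologicalSpace X] {Ω : Set X} (hd : Dense Ω)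
    (hΩ : IsOpen Ω) : frontier Ω = Ωᶜ := by
  rw [hΩ.frontier_eq, hd.closure_eq, compl_eq_univ_sdiff]

theorem lintegral_measure_ball_eq {E : Type*} [NormedAddCommGroup E] [MeasurableSpace E]
    [BorelSpace E] [ProperSpace E] (μ : Measure E) [μ.IsAddHaarMeasure]
    (ν : Measure E) [SFinite ν] (r : ℝ) :
    ∫⁻ z, ν (ball z r) ∂μ = μ (ball 0 r) * ν univ := by
  have hU : MeasurableSet {p : E × E | dist p.2 p.1 < r} :=
    measurableSet_lt (measurable_snd.dist measurable_fst) measurable_const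
  calc ∫⁻ z, ν (ball z r) ∂μ = μ.prod ν {p : E × E | dist p.2 p.1 < r} :=
        (Measure.prod_apply hU).symm
    _ = ∫⁻ y, μ (ball y r) ∂ν := by
        rw [Measure.prod_apply_symm hU]
        refine lintegral_congr fun y => congr_arg μ ?_
        ext w
        simp [dist_comm]
    _ = μ (ball 0 r) * ν univ := by
        simp_rw [Measure.addHaar_ball_center μ, lintegral_const]

theorem AhlforsRegularWithin.le_of_forall_exists_dist_lt {d 𝒜 t ε : ℝ} {Γ : Set (Eucl n)}
    {x : Eucl n} (h𝒜 : 0 < 𝒜) (hreg : AhlforsRegularWithin d 𝒜 Γ (ediam Γ)) (hx : x ∈ Γ)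
    (htΓ : ENNReal.ofReal t < ediam Γ) (hε : 0 < ε) (hεt : ε ≤ t / 4)
    (hnear : ∀ z ∈ ball x (t / 4), ∃ y ∈ Γ, dist z y < ε) :
    𝒜⁻¹ * ε ^ d * (t / 4) ^ n ≤ (2 * ε) ^ n * (𝒜 * t ^ d) := by
  have ht : 0 < t := by linarith
  set ν := (sMeasure d Γ).restrict (ball x t)
  have hν : ν univ ≤ ENNReal.ofReal (𝒜 * t ^ d) := by
    rw [Measure.restrict_apply_univ]
    exact (hreg x hx t ht htΓ).2
  have : IsFiniteMeasure ν := ⟨hν.trans_lt ofReal_lt_top⟩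
  have hlow : ∀ z ∈ ball x (t / 4), ENNReal.ofReal (𝒜⁻¹ * ε ^ d) ≤ ν (ball z (2 * ε)) := by
    intro z hz
    obtain ⟨y, hy, hzy⟩ := hnear z hz
    have hsub : ball y ε ⊆ ball z (2 * ε) ∩ ball x t := fun w hw => by
      rw [mem_ball] at hw hz
      refine ⟨?_, ?_⟩ <;> rw [mem_ball] <;> linarith [dist_triangle w y z, dist_triangle w z x,
        dist_comm y z]
    calc ENNReal.ofReal (𝒜⁻¹ * ε ^ d) ≤ sMeasure d Γ (ball y ε) :=
          (hreg y hy ε hε ((ENNReal.ofReal_le_ofReal (by linarith)).trans_lt htΓ)).1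
      _ ≤ ν (ball z (2 * ε)) := by
          rw [Measure.restrict_apply measurableSet_ball]
          exact measure_mono hsub
  have key : ENNReal.ofReal (𝒜⁻¹ * ε ^ d) * volume (ball x (t / 4)) ≤
      volume (ball (0 : Eucl n) (2 * ε)) * ENNReal.ofReal (𝒜 * t ^ d) :=
    calc ENNReal.ofReal (𝒜⁻¹ * ε ^ d) * volume (ball x (t / 4))
        = ∫⁻ _ in ball x (t / 4), ENNReal.ofReal (𝒜⁻¹ * ε ^ d) := (setLIntegral_const _ _).symm
      _ ≤ ∫⁻ z in ball x (t / 4), ν (ball z (2 * ε)) := setLIntegral_mono' measurableSet_ball hlow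
      _ ≤ ∫⁻ z, ν (ball z (2 * ε)) := setLIntegral_le_lintegral _ _
      _ = volume (ball (0 : Eucl n) (2 * ε)) * ν univ := lintegral_measure_ball_eq volume ν _
      _ ≤ volume (ball (0 : Eucl n) (2 * ε)) * ENNReal.ofReal (𝒜 * t ^ d) := by gcongr
  rw [Measure.addHaar_ball_of_pos volume x (by positivity),
    Measure.addHaar_ball_of_pos volume (0 : Eucl n) (r := 2 * ε) (by positivity),
    finrank_euclideanSpace_fin] at key
  set V := volume (ball (0 : Eucl n) 1)
  have hV : ENNReal.ofReal (𝒜⁻¹ * ε ^ d * (t / 4) ^ n) * V ≤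
      ENNReal.ofReal ((2 * ε) ^ n * (𝒜 * t ^ d)) * V :=
    calc _ = ENNReal.ofReal (𝒜⁻¹ * ε ^ d) * (ENNReal.ofReal ((t / 4) ^ n) * V) := by
          rw [ENNReal.ofReal_mul' (by positivity)]; ring
      _ ≤ ENNReal.ofReal ((2 * ε) ^ n) * V * ENNReal.ofReal (𝒜 * t ^ d) := key
      _ = _ := by rw [ENNReal.ofReal_mul (p := (2 * ε) ^ n) (by positivity)]; ring
  exact (ENNReal.ofReal_le_ofReal_iff (by positivity)).mp
    ((ENNReal.mul_le_mul_iff_left (measure_ball_pos _ _ one_pos).ne' measure_ball_lt_top.ne).mp hV)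

theorem one_le_of_ahlfors_counting {d 𝒜 c t : ℝ} (h𝒜 : 0 < 𝒜) (hc : 0 < c) (ht : 0 < t)
    (h : 𝒜⁻¹ * (c * t) ^ d * (t / 4) ^ n ≤ (2 * (c * t)) ^ n * (𝒜 * t ^ d)) :
    1 ≤ 𝒜 ^ 2 * 8 ^ n * c ^ ((n : ℝ) - d) := by
  have hcn : c ^ n = c ^ d * c ^ ((n : ℝ) - d) := by
    rw [← Real.rpow_add hc, add_sub_cancel, Real.rpow_natCast]
  rw [Real.mul_rpow hc.le ht.le, mul_pow, mul_pow, hcn, div_pow] at h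
  have hK : 0 < c ^ d * t ^ d * t ^ n := by positivity
  have h' : (c ^ d * t ^ d * t ^ n) * (𝒜⁻¹ / 4 ^ n) ≤
      (c ^ d * t ^ d * t ^ n) * (2 ^ n * 𝒜 * c ^ ((n : ℝ) - d)) := by
    convert h using 1 <;> ring
  have h'' := le_of_mul_le_mul_left h' hK
  rw [div_le_iff₀ (by positivity)] at h''
  calc (1 : ℝ) = 𝒜 * 𝒜⁻¹ := (mul_inv_cancel₀ h𝒜.ne').symm
    _ ≤ 𝒜 * (2 ^ n * 𝒜 * c ^ ((n : ℝ) - d) * 4 ^ n) := by gcongr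
    _ = 𝒜 ^ 2 * 8 ^ n * c ^ ((n : ℝ) - d) := by
        rw [show (8 : ℝ) ^ n = 2 ^ n * 4 ^ n by rw [← mul_pow]; norm_num]; ring

/-- The second term makes `𝒜 ^ 2 * 8 ^ n * c ^ (n - d) ≤ 1 / 2`, against
`one_le_of_ahlfors_counting`; the first keeps `c * t ≤ t / 4`. -/
def corkscrewRatio (n : ℕ) (d 𝒜 : ℝ) : ℝ :=
  min (1 / 4) ((2 * 𝒜 ^ 2 * 8 ^ n)⁻¹ ^ ((n : ℝ) - d)⁻¹)

theorem corkscrewRatio_pos {d 𝒜 : ℝ} (h𝒜 : 0 < 𝒜) : 0 < corkscrewRatio n d 𝒜 :=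
  lt_min (by norm_num) (by positivity)

theorem corkscrewRatio_le (d 𝒜 : ℝ) : corkscrewRatio n d 𝒜 ≤ 1 / 4 := min_le_left _ _

theorem mul_corkscrewRatio_rpow_lt_one {d 𝒜 : ℝ} (h𝒜 : 0 < 𝒜) (hdn : d < n) :
    𝒜 ^ 2 * 8 ^ n * corkscrewRatio n d 𝒜 ^ ((n : ℝ) - d) < 1 := by
  have hp : 0 < (n : ℝ) - d := sub_pos.mpr hdn
  have hle : corkscrewRatio n d 𝒜 ^ ((n : ℝ) - d) ≤ (2 * 𝒜 ^ 2 * 8 ^ n)⁻¹ := by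
    calc corkscrewRatio n d 𝒜 ^ ((n : ℝ) - d)
        ≤ ((2 * 𝒜 ^ 2 * 8 ^ n)⁻¹ ^ ((n : ℝ) - d)⁻¹) ^ ((n : ℝ) - d) :=
          Real.rpow_le_rpow (corkscrewRatio_pos h𝒜).le (min_le_right _ _) hp.le
      _ = (2 * 𝒜 ^ 2 * 8 ^ n)⁻¹ := Real.rpow_inv_rpow (by positivity) hp.ne'
  calc 𝒜 ^ 2 * 8 ^ n * corkscrewRatio n d 𝒜 ^ ((n : ℝ) - d)
      ≤ 𝒜 ^ 2 * 8 ^ n * (2 * 𝒜 ^ 2 * 8 ^ n)⁻¹ := by gcongr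
    _ = 1 / 2 := by field_simp
    _ < 1 := by norm_num

theorem AhlforsRegularWithin.exists_ball_subset_compl {d 𝒜 t : ℝ} {Γ : Set (Eucl n)}
    {x : Eucl n} (h𝒜 : 0 < 𝒜) (hdn : d < n) (hreg : AhlforsRegularWithin d 𝒜 Γ (ediam Γ))
    (hx : x ∈ Γ) (ht : 0 < t) (htΓ : ENNReal.ofReal t < ediam Γ) :
    ∃ z ∈ ball x (t / 4), ball z (corkscrewRatio n d 𝒜 * t) ⊆ Γᶜ := by
  set c := corkscrewRatio n d 𝒜
  have hc := corkscrewRatio_pos (n := n) (d := d) h𝒜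
  by_contra! hnear
  have hcount := hreg.le_of_forall_exists_dist_lt (ε := c * t) h𝒜 hx htΓ (by positivity)
    (by nlinarith [corkscrewRatio_le (n := n) d 𝒜]) fun z hz => by
      obtain ⟨y, hy, hyΓ⟩ := not_subset.mp (hnear z hz)
      exact ⟨y, not_not.mp hyΓ, by rwa [dist_comm, ← mem_ball]⟩
  exact (mul_corkscrewRatio_rpow_lt_one h𝒜 hdn).not_ge (one_le_of_ahlfors_counting h𝒜 hc ht hcount)

theorem exists_ball_subset_compl_of_subset_closedBall {E : Type*} [NormedAddCommGroup E]
    [NormedSpace ℝ E] [Nontrivial E] {Γ : Set E} {x : E} {r : ℝ} (hr : 0 < r)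
    (hΓ : Γ ⊆ closedBall x (r / 2)) : ∃ z ∈ ball x r, ball z (r / 4) ⊆ Γᶜ := by
  obtain ⟨z, hz⟩ := (NormedSpace.sphere_nonempty (x := x)).mpr (by positivity : (0 : ℝ) ≤ 3 * r / 4)
  rw [mem_sphere] at hz
  refine ⟨z, by rw [mem_ball, hz]; linarith, fun w hw hwΓ => ?_⟩
  have := mem_closedBall.mp (hΓ hwΓ)
  linarith [mem_ball.mp hw, dist_triangle z w x, dist_comm z w]

theorem AhlforsRegularWithin.exists_ball_subset_compl_of_mem [Nontrivial (Eucl n)]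
    {d 𝒜 r : ℝ} {Γ : Set (Eucl n)} {x : Eucl n} (h𝒜 : 0 < 𝒜) (hdn : d < n)
    (hreg : AhlforsRegularWithin d 𝒜 Γ (ediam Γ)) (hx : x ∈ Γ) (hr : 0 < r) :
    ∃ z ∈ ball x r, ball z (corkscrewRatio n d 𝒜 / 2 * r) ⊆ Γᶜ := by
  have hc := corkscrewRatio_le (n := n) d 𝒜
  rcases le_or_gt (ediam Γ) (ENNReal.ofReal (r / 2)) with hsmall | hlarge
  · have hΓ : Γ ⊆ closedBall x (r / 2) := fun y hy => by
      have hxy := (edist_le_ediam_of_mem hx hy).trans hsmall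
      rw [edist_dist, ENNReal.ofReal_le_ofReal_iff (by positivity)] at hxy
      rwa [mem_closedBall, dist_comm]
    obtain ⟨z, hz, hball⟩ := exists_ball_subset_compl_of_subset_closedBall hr hΓ
    exact ⟨z, hz, (ball_subset_ball (by nlinarith)).trans hball⟩
  · obtain ⟨z, hz, hball⟩ := hreg.exists_ball_subset_compl h𝒜 hdn hx (by positivity) hlarge
    refine ⟨z, ball_subset_ball (by linarith) hz, ?_⟩
    rwa [div_mul_eq_mul_div, mul_div_assoc]

/-- cf. `DavFM21`, Lemma 11.6: a domain whose boundary is `d`-Ahlfors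
regular of lower dimension `d < n - 1` automatically satisfies the interior corkscrew
condition, with constant depending only on `n`, `d`, and `𝒜`. -/
theorem statement13
    (n : ℕ) (hn : 2 ≤ n) (d 𝒜 : ℝ) (hd0 : 0 < d) (hdn : d < (n : ℝ) - 1) (h𝒜 : 1 ≤ 𝒜) :
    ∃ κ ∈ Set.Ioo (0:ℝ) 1,
      ∀ Ω : Set (Eucl n), IsOpen Ω → Ω.Nonempty → Ω ≠ Set.univ →
        AhlforsRegularWithin d 𝒜 (frontier Ω) (EMetric.diam (frontier Ω)) →
        CorkscrewCond κ Ω := by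
  have h𝒜₀ : 0 < 𝒜 := one_pos.trans_le h𝒜
  have : Nontrivial (Eucl n) :=
    Module.nontrivial_of_finrank_pos (by rw [finrank_euclideanSpace_fin]; omega)
  refine ⟨corkscrewRatio n d 𝒜 / 2, ⟨half_pos (corkscrewRatio_pos h𝒜₀), ?_⟩, ?_⟩
  · linarith [corkscrewRatio_le (n := n) d 𝒜]
  intro Ω hΩ hne _ hreg x hx r hr _
  have hfrontier : frontier Ω = Ωᶜ := (hreg.dense hd0 hdn hΩ hne).frontier_eq_compl hΩ
  obtain ⟨z, hz, hball⟩ := hreg.exists_ball_subset_compl_of_mem h𝒜₀ (by linarith) hx hr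
  rw [hfrontier, compl_compl] at hball
  exact ⟨z, hz, hball⟩
end
end
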